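/- arXiv:1607.04490 — 2 statements merged into one kernel-verified Lean document; each statement's English description precedes it below -/
import Mathlib

section
/- Fix ν ∈ (0,1] and λ ∈ (0,∞)^m. For x ∈ [0,∞)^m with s(x) > 0, the rate function Λ*(x) = Σᵢ xᵢ log( ν^ν xᵢ / (λᵢ (s(x))^{1−ν}) ) − ν s(x) + (s(λ))^{1/ν} decomposes as Λ*(x) = s(x)·H( x/s(x) ; λ/s(λ) ) + I(s(x)), where H(p;q) = Σᵢ pᵢ log(pᵢ/qᵢ) is the relative entropy and I(y) = y·log( ν^ν y^ν / s(λ) ) − ν y + (s(λ))^{1/ν}. -/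
open Real Finset

theorem rate_function_entropy_decomposition (m : ℕ) (ν : ℝ) (hν : ν ∈ Set.Ioc (0 : ℝ) 1)
    (lam : Fin m → ℝ) (hlam : ∀ i, 0 < lam i)
    (x : Fin m → ℝ) (hx : ∀ i, 0 ≤ x i) (hsx : 0 < ∑ i, x i) :
    (∑ i, x i * Real.log (ν ^ ν * x i / (lam i * (∑ l, x l) ^ (1 - ν))))
        - ν * (∑ i, x i) + (∑ i, lam i) ^ (1 / ν)
    = (∑ i, x i) *
        (∑ i, (x i / (∑ l, x l)) *
          Real.log ((x i / (∑ l, x l)) / (lam i / (∑ l, lam l))))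
      + ((∑ i, x i) * Real.log (ν ^ ν * (∑ i, x i) ^ ν / (∑ i, lam i))
          - ν * (∑ i, x i) + (∑ i, lam i) ^ (1 / ν)) := by
  obtain ⟨hν0, hν1⟩ := hν
  set S := ∑ i, x i with hS
  set L := ∑ i, lam i with hL
  have hne : (Finset.univ : Finset (Fin m)).Nonempty := by
    by_contra h
    rw [Finset.not_nonempty_iff_eq_empty] at h
    rw [hS, h, Finset.sum_empty] at hsx
    exact lt_irrefl 0 hsx
  have hL0 : 0 < L := Finset.sum_pos (fun i _ => hlam i) hne
  have hS0 : 0 < S := hsx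
  have hνν : (0:ℝ) < ν ^ ν := Real.rpow_pos_of_pos hν0 ν
  have hSν : (0:ℝ) < S ^ ν := Real.rpow_pos_of_pos hS0 ν
  -- reduce to sum identity
  have key : ∀ i, x i * Real.log (ν ^ ν * x i / (lam i * S ^ (1 - ν)))
      = S * ((x i / S) * Real.log ((x i / S) / (lam i / L)))
        + x i * Real.log (ν ^ ν * S ^ ν / L) := by
    intro i
    rcases eq_or_lt_of_le (hx i) with h0 | hxi
    · simp [← h0]
    · have hlami := hlam i
      have harg : ν ^ ν * x i / (lam i * S ^ (1 - ν))
          = ((x i / S) / (lam i / L)) * (ν ^ ν * S ^ ν / L) := by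
        have hsub : S ^ (1 - ν) = S / S ^ ν := by
          rw [Real.rpow_sub hS0, Real.rpow_one]
        rw [hsub]
        field_simp
      have h1 : (0:ℝ) < (x i / S) / (lam i / L) :=
        div_pos (div_pos hxi hS0) (div_pos hlami hL0)
      have h2 : (0:ℝ) < ν ^ ν * S ^ ν / L := div_pos (mul_pos hνν hSν) hL0
      rw [harg, Real.log_mul (ne_of_gt h1) (ne_of_gt h2)]
      field_simp
  have hsum : (∑ i, x i * Real.log (ν ^ ν * x i / (lam i * S ^ (1 - ν))))
      = S * (∑ i, (x i / S) * Real.log ((x i / S) / (lam i / L)))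
        + S * Real.log (ν ^ ν * S ^ ν / L) := by
    calc (∑ i, x i * Real.log (ν ^ ν * x i / (lam i * S ^ (1 - ν))))
        = ∑ i, (S * ((x i / S) * Real.log ((x i / S) / (lam i / L)))
            + x i * Real.log (ν ^ ν * S ^ ν / L)) := by
          exact Finset.sum_congr rfl fun i _ => key i
      _ = S * (∑ i, (x i / S) * Real.log ((x i / S) / (lam i / L)))
            + S * Real.log (ν ^ ν * S ^ ν / L) := by
          rw [Finset.sum_add_distrib, Finset.mul_sum, ← Finset.sum_mul, ← hS]
  rw [hsum]; ring
end

section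
/- Fix ν ∈ (0,1], t > 0, λ ∈ (0,∞)^m, and let P be the pmf on ℕ^m given by P(k) = ((Σᵢkᵢ)!/∏ᵢkᵢ!)·∏ᵢλᵢ^{kᵢ}·t^{νΣᵢkᵢ}/(Γ(νΣᵢkᵢ+1)·E_{ν,1}(s(λ)t^ν)). Then for all θ ∈ ℝ^m, Σ_{k∈ℕ^m} e^{⟨θ,k⟩} P(k) = E_{ν,1}( (Σᵢ λᵢe^{θᵢ}) t^ν ) / E_{ν,1}( s(λ) t^ν ). -/
open Real Finset

-- Summability of r ↦ C^⌊νr⌋₊ / ⌊νr⌋₊! by grouping fibers of r ↦ ⌊νr⌋₊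
lemma aux_summable_floor {ν : ℝ} (hν : 0 < ν) {C : ℝ} (hC : 0 ≤ C) :
    Summable (fun r : ℕ => C ^ (⌊ν * r⌋₊) / (⌊ν * r⌋₊).factorial) := by
  set K := ⌈1/ν⌉₊ with hK
  have htsum : Summable (fun n : ℕ => C ^ n / n.factorial) := Real.summable_pow_div_factorial C
  apply summable_of_sum_le (c := (K : ℝ) * ∑' n : ℕ, C ^ n / n.factorial)
  · intro r
    positivity
  · intro u
    have hmap : ∀ r ∈ u, ⌊ν * r⌋₊ ∈ u.image (fun r : ℕ => ⌊ν * r⌋₊) :=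
      fun r hr => Finset.mem_image_of_mem _ hr
    rw [← Finset.sum_fiberwise_of_maps_to hmap (fun r => C ^ (⌊ν * r⌋₊) / (⌊ν * r⌋₊).factorial)]
    have hcard : ∀ n : ℕ, (u.filter (fun r : ℕ => ⌊ν * r⌋₊ = n)).card ≤ K := by
      intro n
      have hsub : u.filter (fun r : ℕ => ⌊ν * r⌋₊ = n) ⊆ Finset.Ico ⌈(n:ℝ)/ν⌉₊ (⌈(n:ℝ)/ν⌉₊ + K) := by
        intro r hr
        rw [Finset.mem_filter] at hr
        obtain ⟨-, hfl⟩ := hr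
        have h0 : (0:ℝ) ≤ ν * r := by positivity
        have hle : (n : ℝ) ≤ ν * r := by
          rw [← hfl]; exact Nat.floor_le h0
        have hlt : ν * r < (n : ℝ) + 1 := by
          rw [← hfl]; exact Nat.lt_floor_add_one _
        rw [Finset.mem_Ico]
        constructor
        · rw [Nat.ceil_le, div_le_iff₀ hν]
          linarith [mul_comm ν (r:ℝ)]
        · have h1 : (r : ℝ) < ((n:ℝ)+1)/ν := by
            rw [lt_div_iff₀ hν]; linarith [mul_comm (r:ℝ) ν]
          have h2 : ((n:ℝ)+1)/ν = (n:ℝ)/ν + 1/ν := by ring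
          have h3 : (r : ℝ) < (⌈(n:ℝ)/ν⌉₊ : ℝ) + (K : ℝ) := by
            have := Nat.le_ceil ((n:ℝ)/ν)
            have := Nat.le_ceil (1/ν)
            rw [h2] at h1; linarith
          exact_mod_cast h3
      calc (u.filter (fun r : ℕ => ⌊ν * r⌋₊ = n)).card ≤ (Finset.Ico ⌈(n:ℝ)/ν⌉₊ (⌈(n:ℝ)/ν⌉₊ + K)).card :=
            Finset.card_le_card hsub
        _ = K := by rw [Nat.card_Ico]; omega
    calc ∑ n ∈ u.image (fun r : ℕ => ⌊ν * r⌋₊), ∑ r ∈ u.filter (fun r : ℕ => ⌊ν * r⌋₊ = n),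
            C ^ (⌊ν * r⌋₊) / (⌊ν * r⌋₊).factorial
        ≤ ∑ n ∈ u.image (fun r : ℕ => ⌊ν * r⌋₊), (K : ℝ) * (C ^ n / n.factorial) := by
          apply Finset.sum_le_sum
          intro n _
          have : ∑ r ∈ u.filter (fun r : ℕ => ⌊ν * r⌋₊ = n), C ^ (⌊ν * r⌋₊) / (⌊ν * r⌋₊).factorial
              = (u.filter (fun r : ℕ => ⌊ν * r⌋₊ = n)).card * (C ^ n / n.factorial) := by
            rw [Finset.sum_congr rfl (fun r hr => by
                  rw [(Finset.mem_filter.mp hr).2] : ∀ r ∈ u.filter (fun r : ℕ => ⌊ν * r⌋₊ = n),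
                    C ^ (⌊ν * r⌋₊) / (⌊ν * r⌋₊).factorial = C ^ n / n.factorial),
              Finset.sum_const, nsmul_eq_mul]
          rw [this]
          have h1 : (0:ℝ) ≤ C ^ n / n.factorial := by positivity
          have h2 : ((u.filter (fun r : ℕ => ⌊ν * r⌋₊ = n)).card : ℝ) ≤ (K : ℝ) := by
            exact_mod_cast hcard n
          exact mul_le_mul_of_nonneg_right h2 h1
      _ = (K : ℝ) * ∑ n ∈ u.image (fun r : ℕ => ⌊ν * r⌋₊), C ^ n / n.factorial := by
          rw [Finset.mul_sum]
      _ ≤ (K : ℝ) * ∑' n : ℕ, C ^ n / n.factorial := by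
          apply mul_le_mul_of_nonneg_left _ (by positivity)
          exact Summable.sum_le_tsum _ (fun n _ => by positivity) htsum

lemma summable_E {ν : ℝ} (hν : 0 < ν) {x : ℝ} (hx : 0 ≤ x) :
    Summable (fun r : ℕ => x ^ r / Real.Gamma (ν * r + 1)) := by
  set K := ⌈1/ν⌉₊ with hK
  set C := (max 1 x) ^ K with hC
  have hC1 : (1:ℝ) ≤ C := one_le_pow₀ (le_max_left _ _)
  have hC0 : (0:ℝ) ≤ C := by linarith
  rw [← summable_nat_add_iff K]
  have hb : Summable (fun n : ℕ => C * (C ^ (⌊ν * (n + K : ℕ)⌋₊) / (⌊ν * (n + K : ℕ)⌋₊).factorial)) := by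
    exact ((summable_nat_add_iff K).mpr (aux_summable_floor hν hC0)).mul_left C
  apply Summable.of_nonneg_of_le ?_ ?_ hb
  · intro n
    have h := Real.Gamma_pos_of_pos (show (0:ℝ) < ν * ((n + K : ℕ):ℝ) + 1 by positivity)
    positivity
  · intro n
    set r : ℕ := n + K with hr
    have hνK : (1:ℝ) ≤ ν * K := by
      have h1 : (1:ℝ)/ν ≤ K := Nat.le_ceil _
      rw [div_le_iff₀ hν] at h1
      calc (1:ℝ) ≤ K * ν := h1
        _ = ν * K := mul_comm _ _
    have hνr : (1:ℝ) ≤ ν * r := by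
      have : (K:ℝ) ≤ (r:ℝ) := by exact_mod_cast Nat.le_add_left K n
      nlinarith
    set N : ℕ := ⌊ν * r⌋₊ with hN
    have hN1 : 1 ≤ N := by
      rw [hN, Nat.one_le_floor_iff]; exact hνr
    have hfloor_le : (N:ℝ) ≤ ν * r := Nat.floor_le (by positivity)
    have hlt : ν * r < (N:ℝ) + 1 := Nat.lt_floor_add_one _
    -- Gamma lower bound
    have hGam : (N.factorial : ℝ) ≤ Real.Gamma (ν * r + 1) := by
      rw [← Real.Gamma_nat_eq_factorial]
      rcases eq_or_lt_of_le hfloor_le with h | h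
      · rw [h]
      · apply le_of_lt
        apply Real.Gamma_strictMonoOn_Ici
        · simp only [Set.mem_Ici]
          have : (1:ℝ) ≤ (N:ℝ) := by exact_mod_cast hN1
          linarith
        · simp only [Set.mem_Ici]; linarith
        · linarith
    have hGampos : 0 < Real.Gamma (ν * r + 1) := Real.Gamma_pos_of_pos (by positivity)
    -- numerator bound : x^r ≤ C * C^N
    have hnum : x ^ r ≤ C * C ^ N := by
      have h1 : x ^ r ≤ (max 1 x) ^ r := by
        apply pow_le_pow_left₀ hx (le_max_right _ _)
      have hrle : r ≤ K * (N + 1) := by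
        have h2 : (r:ℝ) < ((N:ℝ)+1)/ν := by
          rw [lt_div_iff₀ hν]; nlinarith
        have h3 : ((N:ℝ)+1)/ν ≤ ((N:ℝ)+1) * K := by
          rw [div_le_iff₀ hν]
          have h4 : (1:ℝ) ≤ K * ν := by linarith [mul_comm ν (K:ℝ)]
          nlinarith [Nat.cast_nonneg (α := ℝ) N]
        have h5 : (r:ℝ) < ((K * (N+1) : ℕ) : ℝ) + 1 := by push_cast; nlinarith
        have h5' : r < K * (N+1) + 1 := by exact_mod_cast h5
        omega
      have h6 : (max 1 x) ^ r ≤ (max 1 x) ^ (K * (N+1)) :=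
        pow_le_pow_right₀ (le_max_left _ _) hrle
      have h7 : (max 1 x) ^ (K * (N+1)) = C * C ^ N := by
        rw [pow_mul, hC, ← pow_succ']
      calc x ^ r ≤ (max 1 x) ^ r := h1
        _ ≤ _ := h6
        _ = _ := h7
    have hfin : x ^ r / Real.Gamma (ν * r + 1) ≤ (C * C ^ N) / (N.factorial : ℝ) :=
      div_le_div₀ (by positivity) hnum (by positivity) hGam
    calc x ^ r / Real.Gamma (ν * r + 1) ≤ (C * C ^ N) / (N.factorial : ℝ) := hfin
      _ = C * (C ^ N / (N.factorial : ℝ)) := by ring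

theorem mgf_formula (m : ℕ) (ν : ℝ) (hν : ν ∈ Set.Ioc (0 : ℝ) 1) (t : ℝ) (ht : 0 < t)
    (lam : Fin m → ℝ) (hlam : ∀ i, 0 < lam i) (θ : Fin m → ℝ) :
    ∑' k : Fin m → ℕ,
      Real.exp (∑ i, θ i * k i) *
        ((((∑ i, k i).factorial : ℝ) / ∏ i, (k i).factorial) *
          (∏ i, lam i ^ (k i)) * t ^ (ν * (∑ i, k i)) /
          (Real.Gamma (ν * (∑ i, k i) + 1) *
            ∑' r : ℕ, ((∑ i, lam i) * t ^ ν) ^ r / Real.Gamma (ν * r + 1)))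
      = (∑' r : ℕ, ((∑ i, lam i * Real.exp (θ i)) * t ^ ν) ^ r / Real.Gamma (ν * r + 1)) /
        (∑' r : ℕ, ((∑ i, lam i) * t ^ ν) ^ r / Real.Gamma (ν * r + 1)) := by
  obtain ⟨hν0, hν1⟩ := hν
  set T : ℝ := t ^ ν with hT
  have hT0 : 0 < T := Real.rpow_pos_of_pos ht ν
  set x : ℝ := (∑ i, lam i * Real.exp (θ i)) * T with hx
  set D : ℝ := ∑' r : ℕ, ((∑ i, lam i) * T) ^ r / Real.Gamma (ν * r + 1) with hD
  have hx0 : 0 ≤ x := by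
    rw [hx]
    apply mul_nonneg _ hT0.le
    exact Finset.sum_nonneg fun i _ => mul_nonneg (hlam i).le (Real.exp_pos _).le
  have hE : Summable (fun r : ℕ => x ^ r / Real.Gamma (ν * r + 1)) := summable_E hν0 hx0
  -- the key function
  set f : (Fin m → ℕ) → ℝ := fun k =>
    (Nat.multinomial univ k : ℝ) * (∏ i, (lam i * Real.exp (θ i)) ^ k i) * T ^ (∑ i, k i) /
      Real.Gamma (ν * ((∑ i, k i : ℕ) : ℝ) + 1) with hf
  have hGpos : ∀ s : ℝ, 0 ≤ s → 0 < Real.Gamma (ν * s + 1) := fun s hs =>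
    Real.Gamma_pos_of_pos (by positivity)
  have hfnonneg : ∀ k, 0 ≤ f k := by
    intro k
    simp only [hf]
    have h1 := hGpos ((∑ i, k i : ℕ) : ℝ) (by positivity)
    have h2 : (0:ℝ) ≤ ∏ i, (lam i * Real.exp (θ i)) ^ k i :=
      Finset.prod_nonneg fun i _ => by have := hlam i; positivity
    apply div_nonneg _ h1.le
    apply mul_nonneg (mul_nonneg (Nat.cast_nonneg _) h2) (by positivity)
  -- pointwise identity
  have key : ∀ k : Fin m → ℕ,
      Real.exp (∑ i, θ i * k i) *
        ((((∑ i, k i).factorial : ℝ) / ∏ i, (k i).factorial) *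
          (∏ i, lam i ^ (k i)) * t ^ (ν * (∑ i, k i)) /
          (Real.Gamma (ν * (∑ i, k i) + 1) * D)) = f k * D⁻¹ := by
    intro k
    have hfac : ((∑ i, k i).factorial : ℝ) / ((∏ i, (k i).factorial : ℕ) : ℝ)
        = (Nat.multinomial univ k : ℝ) := by
      have hspec := Nat.multinomial_spec univ k
      have hP : ((∏ i, (k i).factorial : ℕ) : ℝ) ≠ 0 := by
        apply ne_of_gt
        exact_mod_cast Finset.prod_pos fun i _ => Nat.factorial_pos (k i)
      rw [div_eq_iff hP, mul_comm]
      exact_mod_cast hspec.symm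
    have hexp : Real.exp (∑ i, θ i * k i) * ∏ i, lam i ^ k i
        = ∏ i, (lam i * Real.exp (θ i)) ^ k i := by
      rw [Real.exp_sum, ← Finset.prod_mul_distrib]
      refine Finset.prod_congr rfl fun i _ => ?_
      rw [mul_pow, mul_comm (θ i) ((k i : ℝ)), Real.exp_nat_mul]
      ring
    have ht' : t ^ (ν * ((∑ i, k i : ℕ) : ℝ)) = T ^ (∑ i, k i) := by
      rw [Real.rpow_mul ht.le, ← hT, Real.rpow_natCast]
    rw [hfac, ht']
    simp only [hf]
    rw [← hexp]
    simp only [div_eq_mul_inv, mul_inv]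
    ring
  -- inner sums over composition fibers
  have hinner : ∀ r : ℕ, ∑ k ∈ piAntidiag (univ : Finset (Fin m)) r, f k
      = x ^ r / Real.Gamma (ν * r + 1) := by
    intro r
    have hcongr : ∀ k ∈ piAntidiag (univ : Finset (Fin m)) r, f k
        = ((Nat.multinomial univ k : ℝ) * ∏ i, (lam i * Real.exp (θ i)) ^ k i) *
            (T ^ r / Real.Gamma (ν * r + 1)) := by
      intro k hk
      obtain ⟨hsum, -⟩ := Finset.mem_piAntidiag.mp hk
      have hsum' : (∑ i, k i) = r := hsum
      simp only [hf]
      rw [hsum']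
      ring
    rw [Finset.sum_congr rfl hcongr, ← Finset.sum_mul,
      ← Finset.sum_pow_eq_sum_piAntidiag]
    rw [hx, mul_pow]
    ring
  -- summability of f
  have hfsum : Summable f := by
    apply summable_of_sum_le (c := ∑' r : ℕ, x ^ r / Real.Gamma (ν * r + 1)) hfnonneg
    intro u
    set R := (u.sup (fun k => ∑ i, k i)) + 1 with hR
    have hdisj : (↑(Finset.range R) : Set ℕ).PairwiseDisjoint
        (fun r => piAntidiag (univ : Finset (Fin m)) r) := by
      intro a _ b _ hab
      simp only [Function.onFun]
      rw [Finset.disjoint_left]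
      intro k hka hkb
      obtain ⟨ha, -⟩ := Finset.mem_piAntidiag.mp hka
      obtain ⟨hb, -⟩ := Finset.mem_piAntidiag.mp hkb
      exact hab (ha ▸ hb ▸ rfl)
    have hsub : u ⊆ (Finset.range R).biUnion (fun r => piAntidiag (univ : Finset (Fin m)) r) := by
      intro k hk
      apply Finset.mem_biUnion.mpr
      refine ⟨∑ i, k i, Finset.mem_range.mpr (Nat.lt_succ_of_le (Finset.le_sup hk)), ?_⟩
      rw [Finset.mem_piAntidiag]
      exact ⟨rfl, fun i _ => Finset.mem_univ i⟩
    calc ∑ k ∈ u, f k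
        ≤ ∑ k ∈ (Finset.range R).biUnion (fun r => piAntidiag (univ : Finset (Fin m)) r), f k :=
          Finset.sum_le_sum_of_subset_of_nonneg hsub (fun k _ _ => hfnonneg k)
      _ = ∑ r ∈ Finset.range R, ∑ k ∈ piAntidiag (univ : Finset (Fin m)) r, f k :=
          Finset.sum_biUnion hdisj
      _ = ∑ r ∈ Finset.range R, x ^ r / Real.Gamma (ν * r + 1) :=
          Finset.sum_congr rfl fun r _ => hinner r
      _ ≤ ∑' r : ℕ, x ^ r / Real.Gamma (ν * r + 1) :=
          Summable.sum_le_tsum _ (fun r _ => by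
            have := hGpos r (Nat.cast_nonneg r); positivity) hE
  -- fiberwise decomposition of the total sum
  have hfib := (hfsum.hasSum.tsum_fiberwise (fun k : Fin m → ℕ => ∑ i, k i)).tsum_eq
  have hfiber : ∀ r : ℕ,
      ∑' (k : ((fun k : Fin m → ℕ => ∑ i, k i) ⁻¹' {r})), f k
        = x ^ r / Real.Gamma (ν * r + 1) := by
    intro r
    have hset : ((fun k : Fin m → ℕ => ∑ i, k i) ⁻¹' {r})
        = ↑(piAntidiag (univ : Finset (Fin m)) r) := by
      ext k
      simp [Finset.mem_piAntidiag]
    rw [hset, Finset.tsum_subtype']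
    exact hinner r
  have htotal : ∑' k, f k = ∑' r : ℕ, x ^ r / Real.Gamma (ν * r + 1) := by
    rw [← hfib]
    exact tsum_congr hfiber
  calc ∑' k : Fin m → ℕ,
      Real.exp (∑ i, θ i * k i) *
        ((((∑ i, k i).factorial : ℝ) / ∏ i, (k i).factorial) *
          (∏ i, lam i ^ (k i)) * t ^ (ν * (∑ i, k i)) /
          (Real.Gamma (ν * (∑ i, k i) + 1) * D))
      = ∑' k, f k * D⁻¹ := tsum_congr key
    _ = (∑' k, f k) * D⁻¹ := tsum_mul_right
    _ = (∑' r : ℕ, x ^ r / Real.Gamma (ν * r + 1)) * D⁻¹ := by rw [htotal]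
    _ = (∑' r : ℕ, x ^ r / Real.Gamma (ν * r + 1)) / D := (div_eq_mul_inv _ _).symm
end
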